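/- Let f : ℝ^n → ℝ be twice continuously differentiable on an open set containing the unit sphere, let η ∈ (0, 1/2] and M > 0. Fix x with ‖x‖ = 1, set p = ∇f(x), and define x(α) = [ (1 − α²‖p‖²) x − 2α p ] / (1 + α²‖p‖²). Assume x^T p = 0, ‖∇f(x)‖ ≤ M, and that for each α ∈ (0, (2−η)/(5M)] the operator norm of the Hessian ∇²f(z) is at most M for every z on the line segment joining x and x(α). Then for every α ∈ (0, (2−η)/(5M)], f(x(α)) ≤ f(x) − η α ‖∇f(x)‖². In particular, a backtracking curvilinear search with backtracking factor β ∈ (0,1) and initial trial step at most some fixed bound returns a step size α_k ≥ (2−η)β/(5M) > 0. -/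

import Mathlib

/-!
The segment from `x` to `x(α)` leaves the sphere, so Taylor's bound is run along the path
`s ↦ x(s)` instead, which stays on the unit sphere (inside `U`) and has speed at most `2‖p‖`.
There the Hessian bound makes `s ↦ ∇f(x(s))` Lipschitz with constant `2M‖p‖`, and the mean value
inequality for `s ↦ f(x(s)) - ⟪p, x(s)⟫` gives
`f(x(α)) ≤ f(x) + ⟪p, x(α) - x⟫ + 4Mα²‖p‖² = f(x) - α‖p‖² (2 / (1 + α²‖p‖²) - 4Mα)`.
With `t = (2 - η)/5 ≥ Mα ≥ α‖p‖` the bracket is at least `2 - 5t = η`, because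
`2 / (1 + t²) ≥ 2 - t` is `t (1 - t)² ≥ 0`. Backtracking from `ᾱ ≥ t/M` stops at the first trial
step below `t/M`, and the previous one was above it.
-/

open Set InnerProductSpace
open scoped RealInnerProductSpace

variable {E : Type*} [NormedAddCommGroup E] [InnerProductSpace ℝ E]

theorem ContDiffAt.differentiableAt_gradient [CompleteSpace E] {f : E → ℝ} {z : E}
    (hf : ContDiffAt ℝ 2 f z) : DifferentiableAt ℝ (gradient f) z :=
  (toDual ℝ E).symm.toContinuousLinearEquiv.differentiableAt.comp z
    ((hf.fderiv_right (m := 1) (by norm_num)).differentiableAt one_ne_zero)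

section TaylorAlongCurve

variable [CompleteSpace E] {f : E → ℝ} {c c' : ℝ → E} {α K M : ℝ}

theorem norm_gradient_comp_sub_le_of_norm_hessian_le
    (hc : ∀ s ∈ Icc 0 α, HasDerivAt c (c' s) s) (hc' : ∀ s ∈ Icc 0 α, ‖c' s‖ ≤ K)
    (hf : ∀ s ∈ Icc 0 α, ContDiffAt ℝ 2 f (c s))
    (hH : ∀ s ∈ Icc 0 α, ‖fderiv ℝ (gradient f) (c s)‖ ≤ M) (hM : 0 ≤ M) :
    ∀ s ∈ Icc 0 α, ‖gradient f (c s) - gradient f (c 0)‖ ≤ M * K * s := by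
  intro s hs
  have hderiv : ∀ t ∈ Icc 0 α, HasDerivAt (fun t => gradient f (c t))
      (fderiv ℝ (gradient f) (c t) (c' t)) t := fun t ht =>
    (hf t ht).differentiableAt_gradient.hasFDerivAt.comp_hasDerivAt t (hc t ht)
  have hbound : ∀ t ∈ Ico 0 α, ‖fderiv ℝ (gradient f) (c t) (c' t)‖ ≤ M * K := fun t ht =>
    ((fderiv ℝ (gradient f) (c t)).le_opNorm _).trans
      (mul_le_mul (hH t (Ico_subset_Icc_self ht)) (hc' t (Ico_subset_Icc_self ht))
        (norm_nonneg _) hM)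
  simpa using norm_image_sub_le_of_norm_deriv_le_segment'
    (fun t ht => (hderiv t ht).hasDerivWithinAt) hbound s hs

theorem sub_sub_inner_gradient_le_of_norm_hessian_le (hα : 0 ≤ α)
    (hc : ∀ s ∈ Icc 0 α, HasDerivAt c (c' s) s) (hc' : ∀ s ∈ Icc 0 α, ‖c' s‖ ≤ K)
    (hf : ∀ s ∈ Icc 0 α, ContDiffAt ℝ 2 f (c s))
    (hH : ∀ s ∈ Icc 0 α, ‖fderiv ℝ (gradient f) (c s)‖ ≤ M) (hM : 0 ≤ M) :
    f (c α) - f (c 0) - ⟪gradient f (c 0), c α - c 0⟫ ≤ M * K ^ 2 * α ^ 2 := by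
  set g₀ := gradient f (c 0)
  have hK : 0 ≤ K := (norm_nonneg _).trans (hc' 0 (left_mem_Icc.2 hα))
  have hderiv : ∀ s ∈ Icc 0 α, HasDerivAt (fun t => f (c t) - ⟪g₀, c t⟫)
      ⟪gradient f (c s) - g₀, c' s⟫ s := by
    intro s hs
    have hfc := ((hf s hs).differentiableAt two_ne_zero).hasGradientAt.hasFDerivAt.comp_hasDerivAt
      s (hc s hs)
    have hg₀c := (innerSL ℝ g₀).hasFDerivAt.comp_hasDerivAt s (hc s hs)
    refine (hfc.sub hg₀c).congr_deriv ?_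
    simp [inner_sub_left]
  have hbound : ∀ s ∈ Ico 0 α, ‖⟪gradient f (c s) - g₀, c' s⟫‖ ≤ M * K * α * K := by
    intro s hs
    have hs' := Ico_subset_Icc_self hs
    calc ‖⟪gradient f (c s) - g₀, c' s⟫‖ ≤ ‖gradient f (c s) - g₀‖ * ‖c' s‖ :=
          norm_inner_le_norm _ _
      _ ≤ M * K * α * K := by
          gcongr
          · exact (norm_gradient_comp_sub_le_of_norm_hessian_le hc hc' hf hH hM s hs').trans
              (by gcongr; exact hs.2.le)
          · exact hc' s hs'
  have hmvt := norm_image_sub_le_of_norm_deriv_le_segment'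
    (fun s hs => (hderiv s hs).hasDerivWithinAt) hbound α (right_mem_Icc.2 hα)
  rw [Real.norm_eq_abs, sub_zero] at hmvt
  rw [inner_sub_right]
  linarith [le_abs_self (f (c α) - ⟪g₀, c α⟫ - (f (c 0) - ⟪g₀, c 0⟫))]

end TaylorAlongCurve

theorem norm_smul_add_smul_sq_of_inner_eq_zero {x y : E} (h : ⟪x, y⟫ = 0) (a b : ℝ) :
    ‖a • x + b • y‖ ^ 2 = a ^ 2 * ‖x‖ ^ 2 + b ^ 2 * ‖y‖ ^ 2 := by
  have hxy : ⟪a • x, b • y⟫ = 0 := by rw [inner_smul_left, inner_smul_right, h]; simp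
  rw [sq, norm_add_sq_eq_norm_sq_add_norm_sq_real hxy]
  simp only [norm_smul, Real.norm_eq_abs]
  nlinarith [sq_abs a, sq_abs b]

noncomputable def curvilinearPath (x p : E) (α : ℝ) : E :=
  (1 / (1 + α ^ 2 * ‖p‖ ^ 2)) • ((1 - α ^ 2 * ‖p‖ ^ 2) • x - (2 * α) • p)

noncomputable def curvilinearVelocity (x p : E) (s : ℝ) : E :=
  (-4 * s * ‖p‖ ^ 2 / (1 + s ^ 2 * ‖p‖ ^ 2) ^ 2) • x +
    (-2 * (1 - s ^ 2 * ‖p‖ ^ 2) / (1 + s ^ 2 * ‖p‖ ^ 2) ^ 2) • p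

theorem curvilinearPath_eq_smul_add_smul (x p : E) (s : ℝ) :
    curvilinearPath x p s = ((1 - s ^ 2 * ‖p‖ ^ 2) / (1 + s ^ 2 * ‖p‖ ^ 2)) • x +
      (-(2 * s) / (1 + s ^ 2 * ‖p‖ ^ 2)) • p := by
  rw [curvilinearPath, smul_sub, smul_smul, smul_smul, sub_eq_add_neg, ← neg_smul]
  congr 2 <;> ring

theorem curvilinearPath_zero (x p : E) : curvilinearPath x p 0 = x := by
  simp [curvilinearPath]

section UnitSphere

variable {x p : E} (hx : ‖x‖ = 1) (hxp : ⟪x, p⟫ = 0)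
include hx hxp

theorem norm_curvilinearPath (s : ℝ) : ‖curvilinearPath x p s‖ = 1 := by
  rw [← pow_eq_one_iff_of_nonneg (norm_nonneg _) two_ne_zero, curvilinearPath_eq_smul_add_smul,
    norm_smul_add_smul_sq_of_inner_eq_zero hxp, hx]
  field_simp
  ring

theorem norm_curvilinearVelocity_le (s : ℝ) : ‖curvilinearVelocity x p s‖ ≤ 2 * ‖p‖ := by
  have hsq : ‖curvilinearVelocity x p s‖ ^ 2 = (2 * ‖p‖) ^ 2 / (1 + s ^ 2 * ‖p‖ ^ 2) ^ 2 := by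
    rw [curvilinearVelocity, norm_smul_add_smul_sq_of_inner_eq_zero hxp, hx]
    field_simp
    ring
  refine (pow_le_pow_iff_left₀ (norm_nonneg _) (by positivity) two_ne_zero).1 ?_
  rw [hsq]
  exact div_le_self (sq_nonneg _) (one_le_pow₀ (by nlinarith [sq_nonneg (s * ‖p‖)]))

end UnitSphere

theorem hasDerivAt_curvilinearPath (x p : E) (s : ℝ) :
    HasDerivAt (curvilinearPath x p) (curvilinearVelocity x p s) s := by
  have hD : 1 + s ^ 2 * ‖p‖ ^ 2 ≠ 0 := by positivity
  have hsq : HasDerivAt (fun t : ℝ => t ^ 2 * ‖p‖ ^ 2) (2 * s * ‖p‖ ^ 2) s := by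
    simpa using (hasDerivAt_pow 2 s).mul_const (‖p‖ ^ 2)
  have hden := hsq.const_add 1
  have ha : HasDerivAt (fun t : ℝ => (1 - t ^ 2 * ‖p‖ ^ 2) / (1 + t ^ 2 * ‖p‖ ^ 2))
      (-4 * s * ‖p‖ ^ 2 / (1 + s ^ 2 * ‖p‖ ^ 2) ^ 2) s := by
    refine ((hsq.const_sub 1).div hden hD).congr_deriv ?_
    field_simp
    ring
  have hb : HasDerivAt (fun t : ℝ => -(2 * t) / (1 + t ^ 2 * ‖p‖ ^ 2))
      (-2 * (1 - s ^ 2 * ‖p‖ ^ 2) / (1 + s ^ 2 * ‖p‖ ^ 2) ^ 2) s := by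
    refine ((((hasDerivAt_id' s).const_mul 2).fun_neg).div hden hD).congr_deriv ?_
    field_simp
    ring
  rw [show curvilinearPath x p = _ from funext (curvilinearPath_eq_smul_add_smul x p)]
  exact (ha.smul_const x).add (hb.smul_const p)

theorem inner_curvilinearPath_sub {x p : E} (hxp : ⟪x, p⟫ = 0) (s : ℝ) :
    ⟪p, curvilinearPath x p s - x⟫ = -(2 * s * ‖p‖ ^ 2 / (1 + s ^ 2 * ‖p‖ ^ 2)) := by
  rw [curvilinearPath_eq_smul_add_smul, inner_sub_right, inner_add_right, inner_smul_right,
    inner_smul_right, real_inner_comm, hxp, real_inner_self_eq_norm_sq]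
  field_simp
  ring

theorem two_sub_five_mul_le_two_div_sub {t m u : ℝ} (hu : 0 ≤ u) (hum : u ≤ m) (hmt : m ≤ t) :
    2 - 5 * t ≤ 2 / (1 + u ^ 2) - 4 * m := by
  have ht : 0 ≤ t := hu.trans (hum.trans hmt)
  have hu_t : 2 / (1 + t ^ 2) ≤ 2 / (1 + u ^ 2) := by gcongr; exact hum.trans hmt
  have key : 2 - t ≤ 2 / (1 + t ^ 2) := by
    rw [le_div_iff₀ (by positivity)]
    nlinarith [mul_nonneg ht (sq_nonneg (1 - t))]
  linarith

theorem exists_pow_mul_mem_Ioc_and_le {A β a : ℝ} (hA : 0 < A) (hβ : β ∈ Ioo 0 1) (ha : A ≤ a) :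
    ∃ ℓ : ℕ, β ^ ℓ * a ∈ Ioc 0 A ∧ A * β ≤ β ^ ℓ * a := by
  obtain ⟨hβ0, hβ1⟩ := hβ
  obtain ⟨n, hn, hn'⟩ := exists_nat_pow_near ((one_le_div hA).2 ha) (one_lt_inv₀ hβ0 |>.2 hβ1)
  rw [inv_pow, le_div_iff₀ hA, inv_mul_le_iff₀ (by positivity)] at hn
  rw [inv_pow, div_lt_iff₀ hA, lt_inv_mul_iff₀ (by positivity)] at hn'
  have ha0 : 0 < a := hA.trans_le ha
  refine ⟨n + 1, ⟨by positivity, hn'.le⟩, ?_⟩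
  rw [pow_succ, mul_right_comm]
  exact mul_le_mul_of_nonneg_right hn hβ0.le

theorem curvilinearPath_sufficient_decrease [CompleteSpace E] {f : E → ℝ} {x : E} {η M α : ℝ}
    (hx : ‖x‖ = 1) (hxp : ⟪x, gradient f x⟫ = 0) (hgM : ‖gradient f x‖ ≤ M) (hM : 0 < M)
    (hα : 0 ≤ α) (hαM : α ≤ (2 - η) / (5 * M))
    (hf : ∀ s ∈ Icc 0 α, ContDiffAt ℝ 2 f (curvilinearPath x (gradient f x) s))
    (hH : ∀ s ∈ Icc 0 α, ‖fderiv ℝ (gradient f) (curvilinearPath x (gradient f x) s)‖ ≤ M) :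
    f (curvilinearPath x (gradient f x) α) ≤ f x - η * α * ‖gradient f x‖ ^ 2 := by
  set q := ‖gradient f x‖
  have htaylor := sub_sub_inner_gradient_le_of_norm_hessian_le hα
    (fun s _ => hasDerivAt_curvilinearPath x _ s) (fun s _ => norm_curvilinearVelocity_le hx hxp s)
    hf hH hM.le
  rw [curvilinearPath_zero, inner_curvilinearPath_sub hxp] at htaylor
  have hMα : M * α ≤ (2 - η) / 5 := by
    rw [le_div_iff₀ (by positivity)] at hαM
    rw [le_div_iff₀ (by norm_num)]
    linarith
  have hαq : α * q ≤ M * α := by rw [mul_comm M]; exact mul_le_mul_of_nonneg_left hgM hα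
  have hbracket := two_sub_five_mul_le_two_div_sub (by positivity) hαq hMα
  calc f (curvilinearPath x (gradient f x) α)
      ≤ f x - α * q ^ 2 * (2 / (1 + (α * q) ^ 2) - 4 * (M * α)) := by
        have hfrac : 2 * α * q ^ 2 / (1 + α ^ 2 * q ^ 2) = α * q ^ 2 * (2 / (1 + (α * q) ^ 2)) := by
          field_simp
        linarith
    _ ≤ f x - α * q ^ 2 * (2 - 5 * ((2 - η) / 5)) := by gcongr
    _ = f x - η * α * q ^ 2 := by ring

theorem curvilinear_search_step_lower_bound_general
    {n : ℕ} (f : EuclideanSpace ℝ (Fin n) → ℝ)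
    (U : Set (EuclideanSpace ℝ (Fin n))) (hU : IsOpen U)
    (hSU : Metric.sphere (0 : EuclideanSpace ℝ (Fin n)) 1 ⊆ U)
    (hf : ContDiffOn ℝ 2 f U)
    (η M : ℝ) (hη' : η ≤ 1 / 2) (hM : 0 < M)
    (x : EuclideanSpace ℝ (Fin n)) (hx : ‖x‖ = 1)
    (p : EuclideanSpace ℝ (Fin n)) (hp : p = gradient f x)
    (hxp : (inner ℝ x p : ℝ) = 0)
    (hgM : ‖gradient f x‖ ≤ M)
    (xc : ℝ → EuclideanSpace ℝ (Fin n))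
    (hxc : ∀ α : ℝ, xc α = (1 / (1 + α ^ 2 * ‖p‖ ^ 2)) •
      ((1 - α ^ 2 * ‖p‖ ^ 2) • x - (2 * α) • p))
    (hHess : ∀ α ∈ Set.Ioc (0 : ℝ) ((2 - η) / (5 * M)),
      ∀ z ∈ segment ℝ x (xc α), ‖fderiv ℝ (gradient f) z‖ ≤ M) :
    (∀ α ∈ Set.Ioc (0 : ℝ) ((2 - η) / (5 * M)),
      f (xc α) ≤ f x - η * α * ‖gradient f x‖ ^ 2) ∧
    (∀ β ∈ Set.Ioo (0 : ℝ) 1, ∀ αbar : ℝ, (2 - η) / (5 * M) ≤ αbar →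
      ∃ ℓ : ℕ,
        f (xc (β ^ ℓ * αbar)) ≤ f x - η * (β ^ ℓ * αbar) * ‖gradient f x‖ ^ 2 ∧
        (2 - η) * β / (5 * M) ≤ β ^ ℓ * αbar) := by
  subst hp
  obtain rfl : xc = curvilinearPath x (gradient f x) := funext hxc
  have hA : 0 < (2 - η) / (5 * M) := div_pos (by linarith) (by positivity)
  have decrease : ∀ α ∈ Ioc (0 : ℝ) ((2 - η) / (5 * M)),
      f (curvilinearPath x (gradient f x) α) ≤ f x - η * α * ‖gradient f x‖ ^ 2 := by
    intro α hα
    refine curvilinearPath_sufficient_decrease hx hxp hgM hM hα.1.le hα.2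
      (fun s _ => ?_) (fun s hs => ?_)
    · exact hf.contDiffAt (hU.mem_nhds (hSU (by simp [norm_curvilinearPath hx hxp])))
    · -- `x(s)` is the far endpoint of the segment for step `s`, and `x` the near one for step `α`.
      rcases hs.1.eq_or_lt with rfl | hs0
      · rw [curvilinearPath_zero]
        exact hHess α hα x (left_mem_segment ℝ _ _)
      · exact hHess s ⟨hs0, hs.2.trans hα.2⟩ _ (right_mem_segment ℝ _ _)
  refine ⟨decrease, fun β hβ αbar hαbar => ?_⟩
  obtain ⟨ℓ, hℓ, hAℓ⟩ := exists_pow_mul_mem_Ioc_and_le hA hβ hαbar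
  exact ⟨ℓ, decrease _ hℓ, by rwa [mul_div_right_comm]⟩

/-- sufficient decrease along the curvilinear search path for every step size
`α ∈ (0, (2−η)/(5M)]`, and hence a lower bound `(2−η)β/(5M)` for the step size returned
by a backtracking curvilinear search. -/
theorem curvilinear_search_step_lower_bound
    {n : ℕ} (f : EuclideanSpace ℝ (Fin n) → ℝ)
    (U : Set (EuclideanSpace ℝ (Fin n))) (hU : IsOpen U)
    (hSU : Metric.sphere (0 : EuclideanSpace ℝ (Fin n)) 1 ⊆ U)
    (hf : ContDiffOn ℝ 2 f U)
    (η M : ℝ) (hη : 0 < η) (hη' : η ≤ 1 / 2) (hM : 0 < M)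
    (x : EuclideanSpace ℝ (Fin n)) (hx : ‖x‖ = 1)
    (p : EuclideanSpace ℝ (Fin n)) (hp : p = gradient f x)
    (hxp : (inner ℝ x p : ℝ) = 0)
    (hgM : ‖gradient f x‖ ≤ M)
    (xc : ℝ → EuclideanSpace ℝ (Fin n))
    (hxc : ∀ α : ℝ, xc α = (1 / (1 + α ^ 2 * ‖p‖ ^ 2)) •
      ((1 - α ^ 2 * ‖p‖ ^ 2) • x - (2 * α) • p))
    (hHess : ∀ α ∈ Set.Ioc (0 : ℝ) ((2 - η) / (5 * M)),
      ∀ z ∈ segment ℝ x (xc α), ‖fderiv ℝ (gradient f) z‖ ≤ M) :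
    (∀ α ∈ Set.Ioc (0 : ℝ) ((2 - η) / (5 * M)),
      f (xc α) ≤ f x - η * α * ‖gradient f x‖ ^ 2) ∧
    (∀ β ∈ Set.Ioo (0 : ℝ) 1, ∀ αbar : ℝ, (2 - η) / (5 * M) ≤ αbar →
      ∃ ℓ : ℕ,
        f (xc (β ^ ℓ * αbar)) ≤ f x - η * (β ^ ℓ * αbar) * ‖gradient f x‖ ^ 2 ∧
        (2 - η) * β / (5 * M) ≤ β ^ ℓ * αbar) :=
  curvilinear_search_step_lower_bound_general f U hU hSU hf η M hη' hM x hx p hp hxp hgM xc hxc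
    hHess
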